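/- Let Q be the k-algebra generated by a, c, d subject to the relations a·c + c·a = 1, d·c + c·d = 1, d·a + a·d = −2, realized as the quotient of the free algebra k⟨a,c,d⟩ by the two-sided ideal generated by these relations. Then the quotient of Q by the two-sided ideal generated by a², c², d² is isomorphic as a k-algebra to the Clifford algebra of the quadratic form q(v) = v₁² + v₂² + v₃² on k³. -/
import Mathlib

open Polynomial

noncomputable section

/-- Defining relations of `Q`: with `a = ι 0`, `c = ι 1`, `d = ι 2`,
`a·c + c·a = 1`, `d·c + c·d = 1`, `d·a + a·d = -2`. -/
inductive QRel (k : Type) [Field k] :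
    FreeAlgebra k (Fin 3) → FreeAlgebra k (Fin 3) → Prop
  | ac : QRel k (FreeAlgebra.ι k 0 * FreeAlgebra.ι k 1 +
      FreeAlgebra.ι k 1 * FreeAlgebra.ι k 0) 1
  | dc : QRel k (FreeAlgebra.ι k 2 * FreeAlgebra.ι k 1 +
      FreeAlgebra.ι k 1 * FreeAlgebra.ι k 2) 1
  | da : QRel k (FreeAlgebra.ι k 2 * FreeAlgebra.ι k 0 +
      FreeAlgebra.ι k 0 * FreeAlgebra.ι k 2) (-2)

/-- The algebra `Q`. -/
abbrev QAlg (k : Type) [Field k] := RingQuot (QRel k)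

/-- The relations identifying `a²`, `c²`, `d²` with `0`; quotienting `Q` by them realizes
the quotient of `Q` by the two-sided ideal generated by `a²`, `c²`, `d²`. -/
inductive SqRel (k : Type) [Field k] : QAlg k → QAlg k → Prop
  | asq : SqRel k ((RingQuot.mkAlgHom k (QRel k) (FreeAlgebra.ι k 0)) ^ 2) 0
  | csq : SqRel k ((RingQuot.mkAlgHom k (QRel k) (FreeAlgebra.ι k 1)) ^ 2) 0
  | dsq : SqRel k ((RingQuot.mkAlgHom k (QRel k) (FreeAlgebra.ι k 2)) ^ 2) 0

namespace Stmt12Aux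

lemma quad_expand {k R : Type*} [CommRing k] [Ring R] [Algebra k R]
    (A C D : R) (a b c a' b' c' : k) :
    (a • A + b • C + c • D) * (a' • A + b' • C + c' • D)
      + (a' • A + b' • C + c' • D) * (a • A + b • C + c • D)
    = (2*a*a') • (A*A) + (2*b*b') • (C*C) + (2*c*c') • (D*D)
      + (a*b'+a'*b) • (A*C+C*A) + (a*c'+a'*c) • (A*D+D*A)
      + (b*c'+b'*c) • (C*D+D*C) := by
  simp only [mul_add, add_mul, smul_mul_smul_comm, smul_add, add_smul, smul_smul, two_mul]
  module

variable (k : Type) [Field k] [CharZero k]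

abbrev Qf : QuadraticMap k (Fin 3 → k) k :=
  QuadraticMap.weightedSumSquares k (fun _ : Fin 3 => (1 : k))

lemma Qf_apply (v : Fin 3 → k) : Qf k v = v 0 * v 0 + v 1 * v 1 + v 2 * v 2 := by
  simp [QuadraticMap.weightedSumSquares_apply, Fin.sum_univ_three]

lemma ι_anticomm (u v : Fin 3 → k) :
    CliffordAlgebra.ι (Qf k) u * CliffordAlgebra.ι (Qf k) v
      + CliffordAlgebra.ι (Qf k) v * CliffordAlgebra.ι (Qf k) u
    = algebraMap k _ (2 * (u 0 * v 0 + u 1 * v 1 + u 2 * v 2)) := by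
  rw [CliffordAlgebra.ι_mul_ι_add_swap]
  congr 1
  simp only [QuadraticMap.polar, Qf_apply, Pi.add_apply]
  ring

lemma ι_sq (v : Fin 3 → k) :
    CliffordAlgebra.ι (Qf k) v * CliffordAlgebra.ι (Qf k) v
      = algebraMap k _ (v 0 * v 0 + v 1 * v 1 + v 2 * v 2) := by
  rw [CliffordAlgebra.ι_sq_scalar, Qf_apply]

variable (i s : k)

/-- images of the three generators in `k³`. -/
def wv : Fin 3 → Fin 3 → k :=
  ![![1, i, 0], ![1/4, -(i/4), 0], ![1/2, 3*i/2, s]]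

def f0 : FreeAlgebra k (Fin 3) →ₐ[k] CliffordAlgebra (Qf k) :=
  FreeAlgebra.lift k (fun j => CliffordAlgebra.ι (Qf k) (wv k i s j))

@[simp] lemma f0_ι (j : Fin 3) :
    f0 k i s (FreeAlgebra.ι k j) = CliffordAlgebra.ι (Qf k) (wv k i s j) :=
  FreeAlgebra.lift_ι_apply _ _

lemma f0_rel (hi : i * i = -1) : ∀ ⦃x y⦄, QRel k x y → f0 k i s x = f0 k i s y := by
  intro x y h
  induction h with
  | ac =>
      simp only [map_add, map_mul, map_one, f0_ι]
      rw [ι_anticomm]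
      rw [show (2 * (wv k i s 0 0 * wv k i s 1 0 + wv k i s 0 1 * wv k i s 1 1
          + wv k i s 0 2 * wv k i s 1 2) : k) = 1 by
        simp [wv]; linear_combination (-(1/2) : k) * hi]
      exact map_one _
  | dc =>
      simp only [map_add, map_mul, map_one, f0_ι]
      rw [ι_anticomm]
      rw [show (2 * (wv k i s 2 0 * wv k i s 1 0 + wv k i s 2 1 * wv k i s 1 1
          + wv k i s 2 2 * wv k i s 1 2) : k) = 1 by
        simp [wv]; linear_combination (-(3/4) : k) * hi]
      exact map_one _
  | da =>
      simp only [map_add, map_mul, f0_ι, map_neg, map_ofNat]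
      rw [ι_anticomm]
      rw [show (2 * (wv k i s 2 0 * wv k i s 0 0 + wv k i s 2 1 * wv k i s 0 1
          + wv k i s 2 2 * wv k i s 0 2) : k) = -2 by
        simp [wv]; linear_combination (3 : k) * hi]
      rw [map_neg, map_ofNat]

def f1 (hi : i * i = -1) : QAlg k →ₐ[k] CliffordAlgebra (Qf k) :=
  RingQuot.liftAlgHom k ⟨f0 k i s, f0_rel k i s hi⟩

lemma f1_rel (hi : i * i = -1) (hs : s * s = 2) :
    ∀ ⦃x y⦄, SqRel k x y → f1 k i s hi x = f1 k i s hi y := by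
  intro x y h
  induction h with
  | asq =>
      rw [map_pow, map_zero, f1, RingQuot.liftAlgHom_mkAlgHom_apply, f0_ι, pow_two, ι_sq]
      rw [show (wv k i s 0 0 * wv k i s 0 0 + wv k i s 0 1 * wv k i s 0 1
          + wv k i s 0 2 * wv k i s 0 2 : k) = 0 by
        simp [wv]; linear_combination (1 : k) * hi]
      exact map_zero _
  | csq =>
      rw [map_pow, map_zero, f1, RingQuot.liftAlgHom_mkAlgHom_apply, f0_ι, pow_two, ι_sq]
      rw [show (wv k i s 1 0 * wv k i s 1 0 + wv k i s 1 1 * wv k i s 1 1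
          + wv k i s 1 2 * wv k i s 1 2 : k) = 0 by
        simp [wv]; linear_combination (1/16 : k) * hi]
      exact map_zero _
  | dsq =>
      rw [map_pow, map_zero, f1, RingQuot.liftAlgHom_mkAlgHom_apply, f0_ι, pow_two, ι_sq]
      rw [show (wv k i s 2 0 * wv k i s 2 0 + wv k i s 2 1 * wv k i s 2 1
          + wv k i s 2 2 * wv k i s 2 2 : k) = 0 by
        simp [wv]; linear_combination (9/4 : k) * hi + hs]
      exact map_zero _

def fmap (hi : i * i = -1) (hs : s * s = 2) :
    RingQuot (SqRel k) →ₐ[k] CliffordAlgebra (Qf k) :=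
  RingQuot.liftAlgHom k ⟨f1 k i s hi, f1_rel k i s hi hs⟩

/-- generators of the double quotient -/
def gg (j : Fin 3) : RingQuot (SqRel k) :=
  RingQuot.mkAlgHom k (SqRel k) (RingQuot.mkAlgHom k (QRel k) (FreeAlgebra.ι k j))

lemma fmap_gen (hi : i * i = -1) (hs : s * s = 2) (j : Fin 3) :
    fmap k i s hi hs (gg k j) = CliffordAlgebra.ι (Qf k) (wv k i s j) := by
  simp only [fmap, gg, f1]
  rw [RingQuot.liftAlgHom_mkAlgHom_apply, RingQuot.liftAlgHom_mkAlgHom_apply, f0_ι]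

lemma gg_sq (j : Fin 3) : gg k j * gg k j = 0 := by
  have h0 := RingQuot.mkAlgHom_rel k (SqRel.asq (k := k))
  have h1 := RingQuot.mkAlgHom_rel k (SqRel.csq (k := k))
  have h2 := RingQuot.mkAlgHom_rel k (SqRel.dsq (k := k))
  rw [map_pow, map_zero, pow_two] at h0 h1 h2
  fin_cases j
  · exact h0
  · exact h1
  · exact h2

lemma gg_AC : gg k 0 * gg k 1 + gg k 1 * gg k 0 = 1 := by
  have h := congrArg (RingQuot.mkAlgHom k (SqRel k))
    (RingQuot.mkAlgHom_rel k (QRel.ac (k := k)))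
  simpa [map_add, map_mul, gg] using h

lemma gg_DC : gg k 2 * gg k 1 + gg k 1 * gg k 2 = 1 := by
  have h := congrArg (RingQuot.mkAlgHom k (SqRel k))
    (RingQuot.mkAlgHom_rel k (QRel.dc (k := k)))
  simpa [map_add, map_mul, gg] using h

lemma gg_DA : gg k 2 * gg k 0 + gg k 0 * gg k 2 = -2 := by
  have h := congrArg (RingQuot.mkAlgHom k (SqRel k))
    (RingQuot.mkAlgHom_rel k (QRel.da (k := k)))
  simpa [map_add, map_mul, map_neg, map_ofNat, gg] using h

lemma gg_CD : gg k 1 * gg k 2 + gg k 2 * gg k 1 = (1 : k) • (1 : RingQuot (SqRel k)) := by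
  rw [add_comm, gg_DC, one_smul]

lemma gg_AC' : gg k 0 * gg k 1 + gg k 1 * gg k 0 = (1 : k) • (1 : RingQuot (SqRel k)) := by
  rw [gg_AC, one_smul]

lemma gg_AD : gg k 0 * gg k 2 + gg k 2 * gg k 0 = (-2 : k) • (1 : RingQuot (SqRel k)) := by
  rw [add_comm, gg_DA, ← Algebra.algebraMap_eq_smul_one, map_neg, map_ofNat]

lemma key (a b c a' b' c' : k) :
    (a • gg k 0 + b • gg k 1 + c • gg k 2) * (a' • gg k 0 + b' • gg k 1 + c' • gg k 2)
      + (a' • gg k 0 + b' • gg k 1 + c' • gg k 2) * (a • gg k 0 + b • gg k 1 + c • gg k 2)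
    = ((a*b'+a'*b) + (b*c'+b'*c) - 2*(a*c'+a'*c)) • (1 : RingQuot (SqRel k)) := by
  rw [quad_expand (gg k 0) (gg k 1) (gg k 2) a b c a' b' c', gg_sq, gg_sq, gg_sq, gg_AC', gg_AD, gg_CD]
  simp only [smul_zero, smul_smul, zero_add]
  module

def E1 : RingQuot (SqRel k) := (1/2 : k) • gg k 0 + (2 : k) • gg k 1 + (0 : k) • gg k 2
def E2 : RingQuot (SqRel k) := (-(i/2)) • gg k 0 + (2*i) • gg k 1 + (0 : k) • gg k 2
def E3 : RingQuot (SqRel k) := (-(s/2)) • gg k 0 + s • gg k 1 + (s/2) • gg k 2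

def φm : (Fin 3 → k) →ₗ[k] RingQuot (SqRel k) :=
  (LinearMap.proj 0).smulRight (E1 k) + (LinearMap.proj 1).smulRight (E2 k i)
    + (LinearMap.proj 2).smulRight (E3 k s)

lemma φm_apply (v : Fin 3 → k) :
    φm k i s v
      = (v 0 * (1/2) + v 1 * (-(i/2)) + v 2 * (-(s/2))) • gg k 0
        + (v 0 * 2 + v 1 * (2*i) + v 2 * s) • gg k 1
        + (v 0 * 0 + v 1 * 0 + v 2 * (s/2)) • gg k 2 := by
  simp only [φm, E1, E2, E3, LinearMap.add_apply, LinearMap.smulRight_apply,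
    LinearMap.proj_apply]
  module

lemma eq_of_double {R : Type*} [Ring R] [Algebra k R] (x : R) (q : k)
    (h : x + x = (2 * q) • (1 : R)) : x = algebraMap k R q := by
  have h2 : (2 : k) • x = (2 * q) • (1 : R) := by rw [two_smul]; exact h
  calc x = (1/2 : k) • ((2 : k) • x) := by rw [smul_smul]; norm_num
  _ = (1/2 : k) • ((2 * q) • (1 : R)) := by rw [h2]
  _ = algebraMap k R q := by
      rw [smul_smul, Algebra.algebraMap_eq_smul_one]
      congr 1
      ring

lemma φm_sq (hi : i * i = -1) (hs : s * s = 2) (v : Fin 3 → k) :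
    φm k i s v * φm k i s v = algebraMap k _ (Qf k v) := by
  rw [φm_apply]
  refine eq_of_double (R := RingQuot (SqRel k)) k _ _ ?_
  rw [key k (v 0 * (1/2) + v 1 * (-(i/2)) + v 2 * (-(s/2)))
    (v 0 * 2 + v 1 * (2*i) + v 2 * s) (v 0 * 0 + v 1 * 0 + v 2 * (s/2))
    (v 0 * (1/2) + v 1 * (-(i/2)) + v 2 * (-(s/2)))
    (v 0 * 2 + v 1 * (2*i) + v 2 * s) (v 0 * 0 + v 1 * 0 + v 2 * (s/2))]
  congr 1
  rw [Qf_apply]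
  linear_combination (-2 * (v 1 * v 1) : k) * hi + (v 2 * v 2 : k) * hs

def gmap (hi : i * i = -1) (hs : s * s = 2) :
    CliffordAlgebra (Qf k) →ₐ[k] RingQuot (SqRel k) :=
  CliffordAlgebra.lift (Qf k) ⟨φm k i s, φm_sq k i s hi hs⟩

lemma gmap_ι (hi : i * i = -1) (hs : s * s = 2) (v : Fin 3 → k) :
    gmap k i s hi hs (CliffordAlgebra.ι (Qf k) v) = φm k i s v :=
  CliffordAlgebra.lift_ι_apply _ _ _

end Stmt12Aux

open Stmt12Aux

theorem stmt12 (k : Type) [Field k] [IsAlgClosed k] [CharZero k] :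
    Nonempty (RingQuot (SqRel k) ≃ₐ[k]
      CliffordAlgebra (QuadraticMap.weightedSumSquares k (fun _ : Fin 3 => (1 : k)))) := by
  obtain ⟨i, hi'⟩ := IsAlgClosed.exists_pow_nat_eq (-1 : k) two_pos
  obtain ⟨s, hs'⟩ := IsAlgClosed.exists_pow_nat_eq (2 : k) two_pos
  have hi : i * i = -1 := by rw [← pow_two]; exact hi'
  have hs : s * s = 2 := by rw [← pow_two]; exact hs'
  refine ⟨AlgEquiv.ofAlgHom (fmap k i s hi hs) (gmap k i s hi hs) ?_ ?_⟩
  · -- fmap ∘ gmap = id on Clifford algebra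
    apply CliffordAlgebra.hom_ext
    apply LinearMap.ext
    intro v
    simp only [LinearMap.comp_apply, AlgHom.toLinearMap_apply, AlgHom.comp_apply,
      AlgHom.id_apply]
    rw [gmap_ι, φm_apply]
    simp only [map_add, map_smul, fmap_gen]
    rw [← map_smul, ← map_smul, ← map_smul, ← map_add, ← map_add]
    congr 1
    funext j
    fin_cases j <;> simp [wv] <;>
      first
        | ring1
        | linear_combination (-(v 1) : k) * hi
        | linear_combination (v 2 / 2 : k) * hs
  · -- gmap ∘ fmap = id on RingQuot
    have key0 : gmap k i s hi hs (fmap k i s hi hs (gg k 0)) = gg k 0 := by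
      rw [fmap_gen, gmap_ι, φm_apply]
      simp only [wv, Matrix.cons_val_zero, Matrix.cons_val_one, Matrix.head_cons,
        Matrix.cons_val_two, Matrix.tail_cons]
      match_scalars
      · linear_combination (-(1/2) : k) * hi
      · linear_combination (2 : k) * hi
      · ring
    have key1 : gmap k i s hi hs (fmap k i s hi hs (gg k 1)) = gg k 1 := by
      rw [fmap_gen, gmap_ι, φm_apply]
      simp only [wv, Matrix.cons_val_zero, Matrix.cons_val_one, Matrix.head_cons,
        Matrix.cons_val_two, Matrix.tail_cons]
      match_scalars
      · linear_combination (1/8 : k) * hi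
      · linear_combination (-(1/2) : k) * hi
      · ring
    have key2 : gmap k i s hi hs (fmap k i s hi hs (gg k 2)) = gg k 2 := by
      rw [fmap_gen, gmap_ι, φm_apply]
      simp only [wv, Matrix.cons_val_zero, Matrix.cons_val_one, Matrix.head_cons,
        Matrix.cons_val_two, Matrix.tail_cons]
      match_scalars
      · linear_combination (-(3/4) : k) * hi + (-(1/2) : k) * hs
      · linear_combination (3 : k) * hi + hs
      · linear_combination (1/2 : k) * hs
    apply RingQuot.ringQuot_ext'
    apply RingQuot.ringQuot_ext'
    apply FreeAlgebra.hom_ext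
    funext j
    simp only [Function.comp_apply, AlgHom.comp_apply, AlgHom.id_apply]
    fin_cases j
    · exact key0
    · exact key1
    · exact key2
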